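/- arXiv:0906.4842 — 7 statements merged into one kernel-verified Lean document; each statement's English description precedes it below -/
import Mathlib

section
/- Suppose G : X × U → X is increasing in the state and decreasing in the control (componentwise order on ℝ^n), the control set U has lower and upper bounds u♭ ≤ u ≤ u♯ for all u ∈ U, and D ⊆ X × U is an upper set in the state variable (i.e., (x,u) ∈ D and x' ≥ x imply (x',u) ∈ D). Then the viability kernels satisfy V(G♯,D) ⊆ V(G,D) ⊆ V(G♭,D), where G♭(x) = G(x,u♭) and G♯(x) = G(x,u♯) are viewed as controlled systems with the same control set U (the dynamics ignores the control). -/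
/-!
Keep the controls of a viable trajectory of the smaller dynamics and run the larger dynamics
from the same initial state: by monotonicity in the state the new trajectory stays above the
old one, so it stays in `D`, which is an upper set in the state. The bounds on the controls
give `G(x, u♯) ≤ G(x, u) ≤ G(x, u♭)`.
-/

/-- Viability kernel of the controlled dynamics `G` with admissible control set `Uset`
and acceptable set `D`. -/
def Viab {X C : Type*} (G : X → C → X) (Uset : Set C) (D : Set (X × C)) : Set X :=
  {x0 | ∃ (x : ℕ → X) (u : ℕ → C), x 0 = x0 ∧ (∀ t, u t ∈ Uset) ∧
    (∀ t, x (t + 1) = G (x t) (u t)) ∧ (∀ t, (x t, u t) ∈ D)}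

section Comparison

variable {X C : Type*}

def controlledOrbit (G : X → C → X) (x0 : X) (u : ℕ → C) : ℕ → X
  | 0 => x0
  | t + 1 => G (controlledOrbit G x0 u t) (u t)

theorem le_controlledOrbit [Preorder X] {F G : X → C → X} (hG : ∀ c, Monotone (G · c))
    {x : ℕ → X} {u : ℕ → C} (hle : ∀ t, F (x t) (u t) ≤ G (x t) (u t))
    (hx : ∀ t, x (t + 1) = F (x t) (u t)) (t : ℕ) : x t ≤ controlledOrbit G (x 0) u t := by
  induction t with
  | zero => rfl
  | succ t ih =>
    calc x (t + 1) = F (x t) (u t) := hx t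
      _ ≤ G (x t) (u t) := hle t
      _ ≤ G (controlledOrbit G (x 0) u t) (u t) := hG (u t) ih

theorem viab_subset_viab_of_le [Preorder X] {F G : X → C → X} {Uset : Set C}
    {D : Set (X × C)} (hG : ∀ c, Monotone (G · c)) (hFG : ∀ x, ∀ c ∈ Uset, F x c ≤ G x c)
    (hD : ∀ x x' c, (x, c) ∈ D → x ≤ x' → (x', c) ∈ D) :
    Viab F Uset D ⊆ Viab G Uset D := by
  rintro _ ⟨x, u, rfl, hu, hx, hxD⟩
  have hle := le_controlledOrbit hG (fun t => hFG (x t) (u t) (hu t)) hx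
  exact ⟨controlledOrbit G (x 0) u, u, rfl, hu, fun _ => rfl,
    fun t => hD _ _ _ (hxD t) (hle t)⟩

end Comparison

theorem stmt1_general {n m : ℕ} (G : (Fin n → ℝ) → (Fin m → ℝ) → (Fin n → ℝ))
    (U : Set (Fin m → ℝ)) (D : Set ((Fin n → ℝ) × (Fin m → ℝ)))
    (ub us : Fin m → ℝ)
    (hbounds : ∀ u ∈ U, ub ≤ u ∧ u ≤ us)
    (hGstate : ∀ u : Fin m → ℝ, Monotone (fun x => G x u))
    (hGcontrol : ∀ x : Fin n → ℝ, Antitone (fun u => G x u))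
    (hDupper : ∀ (x x' : Fin n → ℝ) (u : Fin m → ℝ), (x, u) ∈ D → x ≤ x' → (x', u) ∈ D) :
    Viab (fun x _ => G x us) U D ⊆ Viab G U D ∧
      Viab G U D ⊆ Viab (fun x _ => G x ub) U D :=
  ⟨viab_subset_viab_of_le hGstate (fun x _ hu => hGcontrol x (hbounds _ hu).2) hDupper,
    viab_subset_viab_of_le (fun _ => hGstate ub) (fun x _ hu => hGcontrol x (hbounds _ hu).1)
      hDupper⟩

/-- for `G` increasing in the state, decreasing in the control,
a bounded control set, and `D` an upper set in the state variable,
`V(G♯,D) ⊆ V(G,D) ⊆ V(G♭,D)`. -/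
theorem stmt1 {n m : ℕ} (G : (Fin n → ℝ) → (Fin m → ℝ) → (Fin n → ℝ))
    (U : Set (Fin m → ℝ)) (D : Set ((Fin n → ℝ) × (Fin m → ℝ)))
    (ub us : Fin m → ℝ) (hub : ub ∈ U) (hus : us ∈ U)
    (hbounds : ∀ u ∈ U, ub ≤ u ∧ u ≤ us)
    (hGstate : ∀ u : Fin m → ℝ, Monotone (fun x => G x u))
    (hGcontrol : ∀ x : Fin n → ℝ, Antitone (fun u => G x u))
    (hDupper : ∀ (x x' : Fin n → ℝ) (u : Fin m → ℝ), (x, u) ∈ D → x ≤ x' → (x', u) ∈ D) :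
    Viab (fun x _ => G x us) U D ⊆ Viab G U D ∧
      Viab G U D ⊆ Viab (fun x _ => G x ub) U D :=
  stmt1_general G U D ub us hbounds hGstate hGcontrol hDupper
end

section
/- Let G : X × U → X be increasing in the state and decreasing in the control, with control bounds u♭, u♯ ∈ U. If D is a production acceptable set (increasing in both state and control), then V(G♯,D♭) ⊆ V(G♭,D♭) ∪ V(G♯,D♯) ⊆ V(G,D) ⊆ V(G♭,D♯), where D♭ = {x : (x,u♭) ∈ D} × {u♭} and D♯ = {x : (x,u♯) ∈ D} × {u♯}. -/
def IsProductionAcceptable {X C : Type*} [LE X] [LE C] (U : Set C) (D : Set (X × C)) :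
    Prop :=
  ∀ (x x' : X), ∀ u ∈ U, ∀ u' ∈ U, x ≤ x' → u ≤ u' → (x, u) ∈ D → (x', u') ∈ D

section

variable {X C : Type*}

theorem mem_viab_const_iff {F : X → X} {U : Set C} {S : Set X} {c : C} {x₀ : X} :
    x₀ ∈ Viab (fun x _ => F x) U (S ×ˢ {c}) ↔ c ∈ U ∧ ∀ t, F^[t] x₀ ∈ S := by
  constructor
  · rintro ⟨x, u, rfl, hU, hstep, hmem⟩
    have hu : ∀ t, u t = c := fun t => (hmem t).2
    have hx : ∀ t, x t = F^[t] (x 0) := by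
      intro t
      induction t with
      | zero => rfl
      | succ t ih => rw [hstep, ih, Function.iterate_succ_apply']
    exact ⟨hu 0 ▸ hU 0, fun t => hx t ▸ (hmem t).1⟩
  · rintro ⟨hc, hS⟩
    exact ⟨fun t => F^[t] x₀, fun _ => c, rfl, fun _ => hc,
      fun t => Function.iterate_succ_apply' F t x₀, fun t => ⟨hS t, rfl⟩⟩

theorem viab_const_mono {F : X → X} {U : Set C} {S S' : Set X} {c c' : C}
    (hS : S ⊆ S') (hc' : c' ∈ U) :
    Viab (fun x _ => F x) U (S ×ˢ {c}) ⊆ Viab (fun x _ => F x) U (S' ×ˢ {c'}) := fun _ h =>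
  mem_viab_const_iff.2 ⟨hc', fun t => hS ((mem_viab_const_iff.1 h).2 t)⟩

theorem viab_const_subset (G : X → C → X) (U : Set C) (D : Set (X × C)) (c : C) :
    Viab (fun x _ => G x c) U ({x | (x, c) ∈ D} ×ˢ {c}) ⊆ Viab G U D := by
  rintro x₀ ⟨x, u, hx₀, hU, hstep, hmem⟩
  have hu : ∀ t, u t = c := fun t => (hmem t).2
  exact ⟨x, u, hx₀, hU, fun t => by rw [hstep, hu], fun t => hu t ▸ (hmem t).1⟩

theorem viab_subset_viab_const_lower [Preorder X] [Preorder C] {G : X → C → X} {U : Set C}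
    {D : Set (X × C)} {ub us : C} (hus : us ∈ U) (hbounds : ∀ u ∈ U, ub ≤ u ∧ u ≤ us)
    (hmono : Monotone (G · ub)) (hanti : ∀ x, Antitone (G x)) (hD : IsProductionAcceptable U D) :
    Viab G U D ⊆ Viab (fun x _ => G x ub) U ({x | (x, us) ∈ D} ×ˢ {us}) := by
  rintro _ ⟨x, u, rfl, hU, hstep, hmem⟩
  have hle : ∀ t, x t ≤ (G · ub)^[t] (x 0) := fun t =>
    hmono.seq_le_seq (y := fun t => (G · ub)^[t] (x 0)) t le_rfl
      (fun k _ => (hstep k).trans_le (hanti _ (hbounds _ (hU k)).1))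
      (fun k _ => (Function.iterate_succ_apply' (G · ub) k (x 0)).symm.le)
  exact mem_viab_const_iff.2
    ⟨hus, fun t => hD _ _ _ (hU t) us hus (hle t) (hbounds _ (hU t)).2 (hmem t)⟩

end

/-- for a monotone bioeconomic dynamics and a production acceptable set `D`,
`V(G♯,D♭) ⊆ V(G♭,D♭) ∪ V(G♯,D♯) ⊆ V(G,D) ⊆ V(G♭,D♯)`. -/
theorem stmt2 {n m : ℕ} (G : (Fin n → ℝ) → (Fin m → ℝ) → (Fin n → ℝ))
    (U : Set (Fin m → ℝ)) (D : Set ((Fin n → ℝ) × (Fin m → ℝ)))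
    (ub us : Fin m → ℝ) (hub : ub ∈ U) (hus : us ∈ U)
    (hbounds : ∀ u ∈ U, ub ≤ u ∧ u ≤ us)
    (hGstate : ∀ u : Fin m → ℝ, Monotone (fun x => G x u))
    (hGcontrol : ∀ x : Fin n → ℝ, Antitone (fun u => G x u))
    (hDprod : ∀ (x x' : Fin n → ℝ), ∀ u ∈ U, ∀ u' ∈ U,
      x ≤ x' → u ≤ u' → (x, u) ∈ D → (x', u') ∈ D) :
    Viab (fun x _ => G x us) U ({x | (x, ub) ∈ D} ×ˢ ({ub} : Set (Fin m → ℝ)))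
        ⊆ Viab (fun x _ => G x ub) U ({x | (x, ub) ∈ D} ×ˢ ({ub} : Set (Fin m → ℝ)))
          ∪ Viab (fun x _ => G x us) U ({x | (x, us) ∈ D} ×ˢ ({us} : Set (Fin m → ℝ))) ∧
      Viab (fun x _ => G x ub) U ({x | (x, ub) ∈ D} ×ˢ ({ub} : Set (Fin m → ℝ)))
          ∪ Viab (fun x _ => G x us) U ({x | (x, us) ∈ D} ×ˢ ({us} : Set (Fin m → ℝ)))
        ⊆ Viab G U D ∧
      Viab G U D ⊆ Viab (fun x _ => G x ub) U ({x | (x, us) ∈ D} ×ˢ ({us} : Set (Fin m → ℝ))) := by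
  have hD : IsProductionAcceptable U D := hDprod
  have hDb_sub_Ds : {x | (x, ub) ∈ D} ⊆ {x | (x, us) ∈ D} := fun x hx =>
    hD x x ub hub us hus le_rfl (hbounds us hus).1 hx
  refine ⟨fun _ h => Or.inr (viab_const_mono hDb_sub_Ds hus h), ?_,
    viab_subset_viab_const_lower hus hbounds (hGstate ub) hGcontrol hD⟩
  exact Set.union_subset (viab_const_subset G U D ub) (viab_const_subset G U D us)
end

section
/- Let G : X × U → X be increasing in the state and decreasing in the control, with control bounds u♭, u♯ ∈ U. If D is a preservation acceptable set (increasing in state, decreasing in control), then V(G♯,D♯) ⊆ V(G,D) = V(G♭,D♭), where D♭ = {x : (x,u♭) ∈ D} × {u♭} and D♯ = {x : (x,u♯) ∈ D} × {u♯}. -/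
namespace Viab

variable {X C : Type*}

theorem constControl_subset (G : X → C → X) (U : Set C) (D : Set (X × C)) (c : C) :
    Viab (fun x _ => G x c) U ({x | (x, c) ∈ D} ×ˢ {c}) ⊆ Viab G U D := by
  rintro x0 ⟨x, u, h0, hU, hdyn, hD⟩
  have hu : ∀ t, u t = c := fun t => (hD t).2
  refine ⟨x, u, h0, hU, fun t => by rw [hdyn t, hu t], fun t => ?_⟩
  rw [hu t]
  exact (hD t).1

theorem le_iterate_of_dominated [Preorder X] {G : X → C → X} {U : Set C} {c : C}
    (hGc : Monotone fun x => G x c) (hdom : ∀ x, ∀ u ∈ U, G x u ≤ G x c)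
    {x : ℕ → X} {u : ℕ → C} (hU : ∀ t, u t ∈ U) (hdyn : ∀ t, x (t + 1) = G (x t) (u t)) :
    ∀ t, x t ≤ (fun y => G y c)^[t] (x 0)
  | 0 => le_rfl
  | t + 1 => by
    rw [hdyn t, Function.iterate_succ_apply']
    exact (hdom (x t) (u t) (hU t)).trans (hGc (le_iterate_of_dominated hGc hdom hU hdyn t))

theorem subset_constControl [Preorder X] (G : X → C → X) (U : Set C) (D : Set (X × C)) {c : C}
    (hc : c ∈ U) (hGc : Monotone fun x => G x c) (hdom : ∀ x, ∀ u ∈ U, G x u ≤ G x c)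
    (hD : ∀ x x', ∀ u ∈ U, x ≤ x' → (x, u) ∈ D → (x', c) ∈ D) :
    Viab G U D ⊆ Viab (fun x _ => G x c) U ({x | (x, c) ∈ D} ×ˢ {c}) := by
  rintro x0 ⟨x, u, rfl, hU, hdyn, hxD⟩
  refine ⟨fun t => (fun y => G y c)^[t] (x 0), fun _ => c, rfl, fun _ => hc,
    fun t => Function.iterate_succ_apply' _ _ _, fun t => ⟨?_, rfl⟩⟩
  exact hD _ _ (u t) (hU t) (le_iterate_of_dominated hGc hdom hU hdyn t) (hxD t)

end Viab

theorem stmt3_general {n m : ℕ} (G : (Fin n → ℝ) → (Fin m → ℝ) → (Fin n → ℝ))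
    (U : Set (Fin m → ℝ)) (D : Set ((Fin n → ℝ) × (Fin m → ℝ)))
    (ub us : Fin m → ℝ) (hub : ub ∈ U)
    (hbounds : ∀ u ∈ U, ub ≤ u ∧ u ≤ us)
    (hGstate : ∀ u : Fin m → ℝ, Monotone (fun x => G x u))
    (hGcontrol : ∀ x : Fin n → ℝ, Antitone (fun u => G x u))
    (hDpres : ∀ (x x' : Fin n → ℝ), ∀ u ∈ U, ∀ u' ∈ U,
      x ≤ x' → u' ≤ u → (x, u) ∈ D → (x', u') ∈ D) :
    Viab (fun x _ => G x us) U ({x | (x, us) ∈ D} ×ˢ ({us} : Set (Fin m → ℝ)))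
        ⊆ Viab G U D ∧
      Viab G U D = Viab (fun x _ => G x ub) U ({x | (x, ub) ∈ D} ×ˢ ({ub} : Set (Fin m → ℝ))) := by
  have hdom : ∀ x, ∀ u ∈ U, G x u ≤ G x ub := fun x u hu => hGcontrol x (hbounds u hu).1
  have hD : ∀ x x', ∀ u ∈ U, x ≤ x' → (x, u) ∈ D → (x', ub) ∈ D :=
    fun x x' u hu hx => hDpres x x' u hu ub hub hx (hbounds u hu).1
  exact ⟨Viab.constControl_subset G U D us,
    (Viab.subset_constControl G U D hub (hGstate ub) hdom hD).antisymm
      (Viab.constControl_subset G U D ub)⟩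

/-- for a monotone bioeconomic dynamics and a preservation acceptable set `D`,
`V(G♯,D♯) ⊆ V(G,D) = V(G♭,D♭)`. -/
theorem stmt3 {n m : ℕ} (G : (Fin n → ℝ) → (Fin m → ℝ) → (Fin n → ℝ))
    (U : Set (Fin m → ℝ)) (D : Set ((Fin n → ℝ) × (Fin m → ℝ)))
    (ub us : Fin m → ℝ) (hub : ub ∈ U) (hus : us ∈ U)
    (hbounds : ∀ u ∈ U, ub ≤ u ∧ u ≤ us)
    (hGstate : ∀ u : Fin m → ℝ, Monotone (fun x => G x u))
    (hGcontrol : ∀ x : Fin n → ℝ, Antitone (fun u => G x u))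
    (hDpres : ∀ (x x' : Fin n → ℝ), ∀ u ∈ U, ∀ u' ∈ U,
      x ≤ x' → u' ≤ u → (x, u) ∈ D → (x', u') ∈ D) :
    Viab (fun x _ => G x us) U ({x | (x, us) ∈ D} ×ˢ ({us} : Set (Fin m → ℝ)))
        ⊆ Viab G U D ∧
      Viab G U D = Viab (fun x _ => G x ub) U ({x | (x, ub) ∈ D} ×ˢ ({ub} : Set (Fin m → ℝ))) :=
  stmt3_general G U D ub us hub hbounds hGstate hGcontrol hDpres
end

section
/- Let G be a monotone bioeconomic dynamics (increasing in state, decreasing in control), U bounded by u♭ ≤ u ≤ u♯, and D = {(x,u) : L_i(x,u) ≥ l_i, i = 1,…,p} a production acceptable set where each L_i(·,u♯) is upper semicontinuous in the state. Suppose G♭(x) = G(x,u♭) has a fixed point x̄ and there is L < 1 with ‖G♭(x) − x̄‖ ≤ L‖x − x̄‖ for all x ∈ V₀ = Proj_X(D). If there exists i with L_i(x̄, u♯) < l_i, then the viability kernel V(G,D) is empty. -/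
/-!
Along a viable trajectory `x`, the states `z t = x t ⊔ x̄` stay in the acceptable set, and
monotonicity squeezes them between `x̄` and the lower dynamics: `x̄ ≤ z (t + 1) ≤ G♭ (z t)`.
The contraction of `G♭` towards `x̄` then forces `z t → x̄`. Since the acceptable set is
increasing in the control, `L i (z t) u♯ ≥ l i` for all `t`, and upper semicontinuity carries
this inequality to the limit `x̄`, contradicting `L i x̄ u♯ < l i`.
-/

open Filter Topology

theorem sup_le_apply_sup_of_fixedPoint {X C : Type*} [SemilatticeSup X] [Preorder C]
    {G : X → C → X} {ub u : C} {xbar : X} (hmono : Monotone (fun y => G y ub))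
    (hanti : ∀ x, Antitone (G x)) (hu : ub ≤ u) (hfix : G xbar ub = xbar) (x : X) :
    G x u ⊔ xbar ≤ G (x ⊔ xbar) ub :=
  sup_le ((hanti x hu).trans (hmono le_sup_left)) (hfix.symm.le.trans (hmono le_sup_right))

theorem pi_norm_sub_le_norm_sub_of_le {ι : Type*} [Fintype ι] {a b c : ι → ℝ}
    (hca : c ≤ a) (hab : a ≤ b) : ‖a - c‖ ≤ ‖b - c‖ := by
  refine (pi_norm_le_iff_of_nonneg (norm_nonneg _)).2 fun j => ?_
  calc ‖(a - c) j‖ = a j - c j := Real.norm_of_nonneg (sub_nonneg.2 (hca j))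
    _ ≤ b j - c j := sub_le_sub_right (hab j) _
    _ ≤ ‖(b - c) j‖ := Real.le_norm_self _
    _ ≤ ‖b - c‖ := norm_le_pi_norm _ j

theorem tendsto_of_norm_sub_le_mul {E : Type*} [SeminormedAddCommGroup E] {z : ℕ → E} {c : E}
    {K : ℝ} (hK0 : 0 ≤ K) (hK1 : K < 1)
    (hstep : ∀ t, ‖z (t + 1) - c‖ ≤ K * ‖z t - c‖) :
    Tendsto z atTop (𝓝 c) := by
  rw [tendsto_iff_norm_sub_tendsto_zero]
  have hgeom : Tendsto (fun t : ℕ => K ^ t * ‖z 0 - c‖) atTop (𝓝 0) := by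
    simpa using (tendsto_pow_atTop_nhds_zero_of_lt_one hK0 hK1).mul_const ‖z 0 - c‖
  exact squeeze_zero (fun _ => norm_nonneg _)
    (fun t => le_geom (u := fun t => ‖z t - c‖) hK0 t fun k _ => hstep k) hgeom

theorem stmt8_general {n m p : ℕ} (G : (Fin n → ℝ) → (Fin m → ℝ) → (Fin n → ℝ))
    (U : Set (Fin m → ℝ)) (ub us : Fin m → ℝ) (hus : us ∈ U)
    (hbounds : ∀ u ∈ U, ub ≤ u ∧ u ≤ us)
    (hGstate : ∀ u : Fin m → ℝ, Monotone (fun x => G x u))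
    (hGcontrol : ∀ x : Fin n → ℝ, Antitone (fun u => G x u))
    (L : Fin p → (Fin n → ℝ) → (Fin m → ℝ) → ℝ) (l : Fin p → ℝ)
    (hDprod : ∀ (x x' : Fin n → ℝ), ∀ u ∈ U, ∀ u' ∈ U, x ≤ x' → u ≤ u' →
      (∀ i, l i ≤ L i x u) → (∀ i, l i ≤ L i x' u'))
    (husc : ∀ i, UpperSemicontinuous (fun x : Fin n → ℝ => L i x us))
    (xbar : Fin n → ℝ) (hfix : G xbar ub = xbar)
    (K : ℝ) (hK0 : 0 ≤ K) (hK1 : K < 1)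
    (hcontr : ∀ x ∈ {y : Fin n → ℝ | ∃ u ∈ U, ∀ i, l i ≤ L i y u},
      ‖G x ub - xbar‖ ≤ K * ‖x - xbar‖)
    (hfail : ∃ i, L i xbar us < l i) :
    Viab G U {xu : (Fin n → ℝ) × (Fin m → ℝ) | ∀ i, l i ≤ L i xu.1 xu.2} = ∅ := by
  rw [Set.eq_empty_iff_forall_notMem]
  rintro x0 ⟨x, u, -, huU, hdyn, hD⟩
  obtain ⟨i, hi⟩ := hfail
  set z : ℕ → Fin n → ℝ := fun t => x t ⊔ xbar
  have hzD : ∀ t j, l j ≤ L j (z t) (u t) := fun t =>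
    hDprod _ _ _ (huU t) _ (huU t) le_sup_left le_rfl (hD t)
  have hstep : ∀ t, ‖z (t + 1) - xbar‖ ≤ K * ‖z t - xbar‖ := fun t =>
    calc ‖z (t + 1) - xbar‖ ≤ ‖G (z t) ub - xbar‖ :=
          pi_norm_sub_le_norm_sub_of_le le_sup_right <| by
            simpa only [z, hdyn t] using sup_le_apply_sup_of_fixedPoint (hGstate ub) hGcontrol
              (hbounds _ (huU t)).1 hfix (x t)
      _ ≤ K * ‖z t - xbar‖ := hcontr _ ⟨u t, huU t, hzD t⟩
  obtain ⟨t, ht⟩ := ((tendsto_of_norm_sub_le_mul hK0 hK1 hstep).eventually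
    (husc i xbar (l i) hi)).exists
  exact (hDprod _ _ _ (huU t) us hus le_rfl (hbounds _ (huU t)).2 (hzD t) i).not_gt ht

/-- for a monotone bioeconomic dynamics, a production acceptable set defined
by indicators and thresholds, and a contracting lower dynamics `G♭` with fixed point `x̄`,
if some indicator fails at `(x̄,u♯)` then the viability kernel is empty. -/
theorem stmt8 {n m p : ℕ} (G : (Fin n → ℝ) → (Fin m → ℝ) → (Fin n → ℝ))
    (U : Set (Fin m → ℝ)) (ub us : Fin m → ℝ) (hub : ub ∈ U) (hus : us ∈ U)
    (hbounds : ∀ u ∈ U, ub ≤ u ∧ u ≤ us)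
    (hGstate : ∀ u : Fin m → ℝ, Monotone (fun x => G x u))
    (hGcontrol : ∀ x : Fin n → ℝ, Antitone (fun u => G x u))
    (L : Fin p → (Fin n → ℝ) → (Fin m → ℝ) → ℝ) (l : Fin p → ℝ)
    (hDprod : ∀ (x x' : Fin n → ℝ), ∀ u ∈ U, ∀ u' ∈ U, x ≤ x' → u ≤ u' →
      (∀ i, l i ≤ L i x u) → (∀ i, l i ≤ L i x' u'))
    (husc : ∀ i, UpperSemicontinuous (fun x : Fin n → ℝ => L i x us))
    (xbar : Fin n → ℝ) (hfix : G xbar ub = xbar)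
    (K : ℝ) (hK0 : 0 ≤ K) (hK1 : K < 1)
    (hcontr : ∀ x ∈ {y : Fin n → ℝ | ∃ u ∈ U, ∀ i, l i ≤ L i y u},
      ‖G x ub - xbar‖ ≤ K * ‖x - xbar‖)
    (hfail : ∃ i, L i xbar us < l i) :
    Viab G U {xu : (Fin n → ℝ) × (Fin m → ℝ) | ∀ i, l i ≤ L i xu.1 xu.2} = ∅ :=
  stmt8_general G U ub us hus hbounds hGstate hGcontrol L l hDprod husc xbar hfix K hK0 hK1 hcontr
    hfail
end

section
/- Let G be a monotone bioeconomic dynamics, U bounded by u♭ ≤ u ≤ u♯, and D = {(x,u) : L_i(x,u) ≥ l_i, i = 1,…,p} a preservation acceptable set with each L_i(·,u♭) upper semicontinuous in the state. Suppose G♭(x) = G(x,u♭) has a fixed point x̄ and there exists L < 1 with ‖G♭(x) − x̄‖ ≤ L‖x − x̄‖ for all x ∈ V₀ = Proj_X(D). Then the viability kernel V(G,D) is nonempty if and only if L_i(x̄, u♭) ≥ l_i for all i = 1,…,p. -/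
open Filter Topology Function

section Viability

variable {X C : Type*} {G : X → C → X} {U : Set C} {D : Set (X × C)}

theorem mem_viab_of_fixed {x : X} {u : C} (hfix : G x u = x) (hu : u ∈ U) (hD : (x, u) ∈ D) :
    x ∈ Viab G U D :=
  ⟨fun _ => x, fun _ => u, rfl, fun _ => hu, fun _ => hfix.symm, fun _ => hD⟩

variable [Preorder X] [Preorder C]

theorem le_iterate_of_le_control (hGstate : ∀ u, Monotone (fun x => G x u))
    (hGcontrol : ∀ x, Antitone (fun u => G x u)) {ub : C} {x : ℕ → X} {u : ℕ → C}
    (hu : ∀ t, ub ≤ u t) (hstep : ∀ t, x (t + 1) = G (x t) (u t)) (t : ℕ) :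
    x t ≤ (fun y => G y ub)^[t] (x 0) :=
  (hGstate ub).seq_le_seq (y := fun t => (fun y => G y ub)^[t] (x 0)) t le_rfl
    (fun k _ => (hstep k).trans_le (hGcontrol _ (hu k)))
    (fun k _ => (iterate_succ_apply' (fun y => G y ub) k (x 0)).ge)

theorem iterate_mem_of_mem_viab (hGstate : ∀ u, Monotone (fun x => G x u))
    (hGcontrol : ∀ x, Antitone (fun u => G x u))
    (hDpres : ∀ (x x' : X), ∀ u ∈ U, ∀ u' ∈ U, x ≤ x' → u' ≤ u → (x, u) ∈ D → (x', u') ∈ D)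
    {ub : C} (hub : ub ∈ U) (hbounds : ∀ u ∈ U, ub ≤ u) {x₀ : X} (hx₀ : x₀ ∈ Viab G U D)
    (t : ℕ) : ((fun y => G y ub)^[t] x₀, ub) ∈ D := by
  obtain ⟨x, u, rfl, hu, hstep, hD⟩ := hx₀
  have hub_le : ∀ t, ub ≤ u t := fun t => hbounds _ (hu t)
  exact hDpres _ _ _ (hu t) _ hub (le_iterate_of_le_control hGstate hGcontrol hub_le hstep t)
    (hub_le t) (hD t)

end Viability

theorem tendsto_of_dist_succ_le_mul {X : Type*} [PseudoMetricSpace X] {y : ℕ → X} {a : X}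
    {K : ℝ} (hK0 : 0 ≤ K) (hK1 : K < 1) (hy : ∀ t, dist (y (t + 1)) a ≤ K * dist (y t) a) :
    Tendsto y atTop (𝓝 a) := by
  rw [tendsto_iff_dist_tendsto_zero]
  have hgeom : Tendsto (fun t => K ^ t * dist (y 0) a) atTop (𝓝 0) := by
    simpa using (tendsto_pow_atTop_nhds_zero_of_lt_one hK0 hK1).mul_const (dist (y 0) a)
  exact squeeze_zero (fun _ => dist_nonneg)
    (fun t => le_geom (u := fun t => dist (y t) a) hK0 t fun k _ => hy k) hgeom

theorem stmt9_general {n m p : ℕ} (G : (Fin n → ℝ) → (Fin m → ℝ) → (Fin n → ℝ))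
    (U : Set (Fin m → ℝ)) (ub us : Fin m → ℝ) (hub : ub ∈ U)
    (hbounds : ∀ u ∈ U, ub ≤ u ∧ u ≤ us)
    (hGstate : ∀ u : Fin m → ℝ, Monotone (fun x => G x u))
    (hGcontrol : ∀ x : Fin n → ℝ, Antitone (fun u => G x u))
    (L : Fin p → (Fin n → ℝ) → (Fin m → ℝ) → ℝ) (l : Fin p → ℝ)
    (hDpres : ∀ (x x' : Fin n → ℝ), ∀ u ∈ U, ∀ u' ∈ U, x ≤ x' → u' ≤ u →
      (∀ i, l i ≤ L i x u) → (∀ i, l i ≤ L i x' u'))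
    (husc : ∀ i, UpperSemicontinuous (fun x : Fin n → ℝ => L i x ub))
    (xbar : Fin n → ℝ) (hfix : G xbar ub = xbar)
    (K : ℝ) (hK0 : 0 ≤ K) (hK1 : K < 1)
    (hcontr : ∀ x ∈ {y : Fin n → ℝ | ∃ u ∈ U, ∀ i, l i ≤ L i y u},
      ‖G x ub - xbar‖ ≤ K * ‖x - xbar‖) :
    (Viab G U {xu : (Fin n → ℝ) × (Fin m → ℝ) | ∀ i, l i ≤ L i xu.1 xu.2}).Nonempty ↔
      ∀ i, l i ≤ L i xbar ub := by
  constructor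
  · rintro ⟨x₀, hx₀⟩
    have hD : ∀ t, ∀ i, l i ≤ L i ((fun y => G y ub)^[t] x₀) ub :=
      iterate_mem_of_mem_viab hGstate hGcontrol hDpres hub (fun u hu => (hbounds u hu).1) hx₀
    have hlim : Tendsto (fun t => (fun y => G y ub)^[t] x₀) atTop (𝓝 xbar) := by
      refine tendsto_of_dist_succ_le_mul hK0 hK1 fun t => ?_
      rw [iterate_succ_apply', dist_eq_norm, dist_eq_norm]
      exact hcontr _ ⟨ub, hub, hD t⟩
    exact fun i => ((husc i).isClosed_preimage (l i)).mem_of_tendsto hlim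
      (Eventually.of_forall fun t => hD t i)
  · exact fun h => ⟨xbar, mem_viab_of_fixed hfix hub h⟩

/-- for a monotone bioeconomic dynamics, a preservation acceptable set defined
by indicators and thresholds, and a contracting lower dynamics `G♭` with fixed point `x̄`,
the viability kernel is nonempty iff all indicators hold at `(x̄,u♭)`. -/
theorem stmt9 {n m p : ℕ} (G : (Fin n → ℝ) → (Fin m → ℝ) → (Fin n → ℝ))
    (U : Set (Fin m → ℝ)) (ub us : Fin m → ℝ) (hub : ub ∈ U) (hus : us ∈ U)
    (hbounds : ∀ u ∈ U, ub ≤ u ∧ u ≤ us)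
    (hGstate : ∀ u : Fin m → ℝ, Monotone (fun x => G x u))
    (hGcontrol : ∀ x : Fin n → ℝ, Antitone (fun u => G x u))
    (L : Fin p → (Fin n → ℝ) → (Fin m → ℝ) → ℝ) (l : Fin p → ℝ)
    (hDpres : ∀ (x x' : Fin n → ℝ), ∀ u ∈ U, ∀ u' ∈ U, x ≤ x' → u' ≤ u →
      (∀ i, l i ≤ L i x u) → (∀ i, l i ≤ L i x' u'))
    (husc : ∀ i, UpperSemicontinuous (fun x : Fin n → ℝ => L i x ub))
    (xbar : Fin n → ℝ) (hfix : G xbar ub = xbar)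
    (K : ℝ) (hK0 : 0 ≤ K) (hK1 : K < 1)
    (hcontr : ∀ x ∈ {y : Fin n → ℝ | ∃ u ∈ U, ∀ i, l i ≤ L i y u},
      ‖G x ub - xbar‖ ≤ K * ‖x - xbar‖) :
    (Viab G U {xu : (Fin n → ℝ) × (Fin m → ℝ) | ∀ i, l i ≤ L i xu.1 xu.2}).Nonempty ↔
      ∀ i, l i ≤ L i xbar ub :=
  stmt9_general G U ub us hub hbounds hGstate hGcontrol L l hDpres husc xbar hfix K hK0 hK1 hcontr
end

section
/- For the age-class dynamics with Beverton-Holt recruitment φ(B) = B/(α + βB) with α ≥ 0, β > 0, and any λ ≥ 0, the vector N̄(λ) with components N̄_a(λ) = Z(λ) s_a(λ) — where s₁(λ)=1, s_a(λ) = exp(−Σ_{k=1}^{a−1}(M_k + λF_k)) for 2 ≤ a ≤ A−1, s_A(λ) = exp(−Σ_{k=1}^{A−1}(M_k + λF_k))/(1 − π e^{−(M_A+λF_A)}), spr(λ) = Σ_a γ_a w_a s_a(λ), and Z(λ) = max{0, (spr(λ) − α)/(β·spr(λ))} — is a fixed point of N ↦ G(N,λ). -/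
open Finset

/-- Spawning stock biomass. -/
def SSB (A : ℕ) (γ w : ℕ → ℝ) (N : Fin A → ℝ) : ℝ :=
  ∑ b : Fin A, γ b.val * w b.val * N b

/-- Age-structured harvested population dynamics (ages are 0-indexed: index `a`
corresponds to age class `a+1` of the paper). -/
noncomputable def Gdyn (A : ℕ) (M F γ w : ℕ → ℝ) (pi : ℝ) (φ : ℝ → ℝ)
    (N : Fin A → ℝ) (lam : ℝ) (a : Fin A) : ℝ :=
  if h0 : a.val = 0 then φ (SSB A γ w N)
  else if h1 : a.val < A - 1 then
    Real.exp (-(M (a.val - 1) + lam * F (a.val - 1))) *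
      N ⟨a.val - 1, by have := a.isLt; omega⟩
  else
    Real.exp (-(M (A - 2) + lam * F (A - 2))) * N ⟨A - 2, by have := a.isLt; omega⟩
      + pi * Real.exp (-(M (A - 1) + lam * F (A - 1))) * N ⟨A - 1, by have := a.isLt; omega⟩

/-- Baranov yield. -/
noncomputable def Yield (A : ℕ) (M F w : ℕ → ℝ) (N : Fin A → ℝ) (lam : ℝ) : ℝ :=
  ∑ a : Fin A, w a.val * (lam * F a.val / (lam * F a.val + M a.val)) *
    (1 - Real.exp (-(M a.val + lam * F a.val))) * N a

/-- Proportion of equilibrium recruits surviving up to age class `a`. -/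
noncomputable def surv (A : ℕ) (M F : ℕ → ℝ) (pi lam : ℝ) (a : Fin A) : ℝ :=
  if a.val = 0 then 1
  else if a.val < A - 1 then
    Real.exp (-(∑ k ∈ Finset.range a.val, (M k + lam * F k)))
  else
    Real.exp (-(∑ k ∈ Finset.range (A - 1), (M k + lam * F k))) /
      (1 - pi * Real.exp (-(M (A - 1) + lam * F (A - 1))))

/-- Spawning per recruit at equilibrium. -/
noncomputable def spr (A : ℕ) (M F γ w : ℕ → ℝ) (pi lam : ℝ) : ℝ :=
  ∑ a : Fin A, γ a.val * w a.val * surv A M F pi lam a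

/-- Equilibrium recruitment for the Beverton-Holt model. -/
noncomputable def Zval (A : ℕ) (M F γ w : ℕ → ℝ) (pi lam α β : ℝ) : ℝ :=
  max 0 ((spr A M F γ w pi lam - α) / (β * spr A M F γ w pi lam))

/-- Equilibrium abundance vector. -/
noncomputable def Nbar (A : ℕ) (M F γ w : ℕ → ℝ) (pi lam α β : ℝ) (a : Fin A) : ℝ :=
  Zval A M F γ w pi lam α β * surv A M F pi lam a

/-!
Away from the recruitment class, `G` acts linearly and the survival schedule `s` is
invariant under it: each class is the previous one discounted by one year of mortality,
and the plus group balances inflow against its own survival. Scaling by `Z` therefore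
leaves only the recruitment equation `Z = φ(Z · spr)`, which the Beverton–Holt
equilibrium `Z = max 0 ((spr - α) / (β spr))` solves (trivially when it is `0`).
-/

theorem isFixedPt_bevertonHolt_max (α β S : ℝ) :
    Function.IsFixedPt (fun Z => Z * S / (α + β * (Z * S))) (max 0 ((S - α) / (β * S))) := by
  rcases le_or_gt ((S - α) / (β * S)) 0 with hle | hpos
  · simp [Function.IsFixedPt, max_eq_left hle]
  · have hβS : β * S ≠ 0 := by
      rintro h
      simp [h] at hpos
    have hβ : β ≠ 0 := left_ne_zero_of_mul hβS
    have hS : S ≠ 0 := right_ne_zero_of_mul hβS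
    have hden : α + β * ((S - α) / (β * S) * S) = S := by
      field_simp
      ring
    simp only [Function.IsFixedPt, max_eq_right hpos.le, hden, mul_div_cancel_right₀ _ hS]

theorem SSB_Nbar (A : ℕ) (M F γ w : ℕ → ℝ) (pi lam α β : ℝ) :
    SSB A γ w (Nbar A M F γ w pi lam α β) =
      Zval A M F γ w pi lam α β * spr A M F γ w pi lam := by
  simp only [SSB, Nbar, spr, mul_sum]
  exact sum_congr rfl fun _ _ => by ring

section Survival

variable {A : ℕ} (M F : ℕ → ℝ) (pi lam : ℝ)

theorem surv_of_lt {a : Fin A} (ha : a.val < A - 1) :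
    surv A M F pi lam a = Real.exp (-∑ k ∈ range a.val, (M k + lam * F k)) := by
  by_cases h0 : a.val = 0
  · simp [surv, h0]
  · simp [surv, h0, ha]

theorem surv_succ_of_lt {j : ℕ} (hj : j + 1 < A - 1) :
    surv A M F pi lam ⟨j + 1, by omega⟩ =
      Real.exp (-(M j + lam * F j)) * surv A M F pi lam ⟨j, by omega⟩ := by
  rw [surv_of_lt M F pi lam hj, surv_of_lt M F pi lam (by simp only; omega), ← Real.exp_add,
    sum_range_succ]
  congr 1
  ring

theorem surv_last_balance (hA : 2 ≤ A) (hq : pi * Real.exp (-(M (A - 1) + lam * F (A - 1))) ≠ 1) :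
    surv A M F pi lam ⟨A - 1, by omega⟩ =
      Real.exp (-(M (A - 2) + lam * F (A - 2))) * surv A M F pi lam ⟨A - 2, by omega⟩ +
        pi * Real.exp (-(M (A - 1) + lam * F (A - 1))) * surv A M F pi lam ⟨A - 1, by omega⟩ := by
  have hlast : surv A M F pi lam ⟨A - 1, by omega⟩ =
      Real.exp (-∑ k ∈ range (A - 1), (M k + lam * F k)) /
        (1 - pi * Real.exp (-(M (A - 1) + lam * F (A - 1)))) := by
    simp [surv, show A - 1 ≠ 0 by omega]
  have hsum : ∑ k ∈ range (A - 1), (M k + lam * F k) =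
      (M (A - 2) + lam * F (A - 2)) + ∑ k ∈ range (A - 2), (M k + lam * F k) := by
    rw [show A - 1 = A - 2 + 1 by omega, sum_range_succ, add_comm]
  rw [surv_of_lt M F pi lam (a := ⟨A - 2, by omega⟩) (by simp only; omega), ← Real.exp_add,
    ← neg_add, ← hsum, hlast]
  have hq' : 1 - pi * Real.exp (-(M (A - 1) + lam * F (A - 1))) ≠ 0 := sub_ne_zero.mpr hq.symm
  field_simp
  ring

end Survival

theorem Gdyn_mul_surv_of_ne_zero (A : ℕ) (M F γ w : ℕ → ℝ) (pi lam c : ℝ) (φ : ℝ → ℝ)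
    (hq : pi * Real.exp (-(M (A - 1) + lam * F (A - 1))) ≠ 1) {a : Fin A} (ha : a.val ≠ 0) :
    Gdyn A M F γ w pi φ (fun b => c * surv A M F pi lam b) lam a = c * surv A M F pi lam a := by
  rw [Gdyn, dif_neg ha]
  split_ifs with hmid
  · obtain ⟨_ | j, hj⟩ := a
    · exact absurd rfl ha
    · simp only [Nat.add_sub_cancel]
      rw [surv_succ_of_lt M F pi lam hmid]
      ring
  · obtain ⟨i, hi⟩ := a
    obtain rfl : i = A - 1 := by simp only at hmid; omega
    conv_rhs => rw [surv_last_balance M F pi lam (by simp only at ha; omega) hq]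
    ring

theorem stmt13_general (A : ℕ) (M F γ w : ℕ → ℝ) (pi : ℝ) (α β lam : ℝ)
    (hpie : pi * Real.exp (-(M (A - 1) + lam * F (A - 1))) < 1) :
    Gdyn A M F γ w pi (fun B => B / (α + β * B)) (Nbar A M F γ w pi lam α β) lam =
      Nbar A M F γ w pi lam α β := by
  funext a
  by_cases ha : a.val = 0
  · have hrecruit : surv A M F pi lam a = 1 := by simp [surv, ha]
    rw [Gdyn, dif_pos ha, SSB_Nbar, Nbar, hrecruit, mul_one]
    exact isFixedPt_bevertonHolt_max α β _
  · exact Gdyn_mul_surv_of_ne_zero A M F γ w pi lam _ _ hpie.ne ha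

/-- for Beverton-Holt recruitment `φ(B) = B/(α+βB)` the vector
`N̄(λ) = Z(λ)·s(λ)` is a fixed point of `N ↦ G(N,λ)`. -/
theorem stmt13 (A : ℕ) (hA : 2 ≤ A) (M F γ w : ℕ → ℝ) (pi : ℝ) (α β lam : ℝ)
    (hM : ∀ k, 0 ≤ M k) (hF : ∀ k, 0 ≤ F k) (hγ : ∀ k, 0 ≤ γ k) (hw : ∀ k, 0 ≤ w k)
    (hpi : pi = 0 ∨ pi = 1)
    (hpie : pi * Real.exp (-(M (A - 1) + lam * F (A - 1))) < 1)
    (hspr : 0 < spr A M F γ w pi lam)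
    (hα : 0 ≤ α) (hβ : 0 < β) (hlam : 0 ≤ lam) :
    Gdyn A M F γ w pi (fun B => B / (α + β * B)) (Nbar A M F γ w pi lam α β) lam =
      Nbar A M F γ w pi lam α β :=
  stmt13_general A M F γ w pi α β lam hpie
end

section
/- For the age-class dynamics G with a concave, increasing, differentiable stock-recruitment relationship φ, fixed point N̄ = N̄(λ♭) of G(·,λ♭), and any N ∈ ℝ₊^A with SSB(N) ≥ SSB(N̄): ‖G(N,λ♭) − N̄‖₁ ≤ φ_G(λ♭) ‖N − N̄‖₁, where φ_G(λ♭) = φ'(SSB(N̄)) · max_a γ_a w_a + max_a e^{−(M_a + λ♭ F_a)} and ‖·‖₁ is the ℓ¹ norm on ℝ^A. -/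
open Finset

/-! The recruitment coordinate moves by `|φ (SSB N) - φ (SSB N̄)|`, which concavity and
monotonicity bound by `φ' (SSB N̄) * (SSB N - SSB N̄) ≤ φ' (SSB N̄) * max γ_a w_a * ‖N - N̄‖₁`.
Every other coordinate is a survival factor times a coordinate of `N - N̄`, shifted by one age
class, plus (in the plus group) the last coordinate once more; each coordinate of `N - N̄` is
thus used exactly once, so these contribute at most `max e^{-(M_a + λ F_a)} * ‖N - N̄‖₁`. -/

open Set in
theorem ConcaveOn.deriv_nonneg_of_monotoneOn {f : ℝ → ℝ} {a x : ℝ}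
    (hf : ConcaveOn ℝ (Ici a) f) (hmono : MonotoneOn f (Ici a)) (hx : a ≤ x)
    (hd : DifferentiableAt ℝ f x) : 0 ≤ deriv f x :=
  have hx1 : a ≤ x + 1 := by linarith
  (hmono.slope_nonneg hx hx1).trans (hf.slope_le_deriv hx hx1 (lt_add_one x) hd)

open Set in
theorem ConcaveOn.abs_sub_le_deriv_mul_of_monotoneOn {f : ℝ → ℝ} {a x y t : ℝ}
    (hf : ConcaveOn ℝ (Ici a) f) (hmono : MonotoneOn f (Ici a)) (hx : a ≤ x) (hxy : x ≤ y)
    (hd : DifferentiableAt ℝ f x) (ht : y - x ≤ t) : |f y - f x| ≤ deriv f x * t := by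
  have hderiv := hf.deriv_nonneg_of_monotoneOn hmono hx hd
  rcases hxy.eq_or_lt with rfl | hlt
  · simpa using mul_nonneg hderiv (by simpa using ht)
  have hy : a ≤ y := hx.trans hxy
  calc |f y - f x| = slope f x y * (y - x) := by
        rw [abs_of_nonneg (sub_nonneg.2 (hmono hx hy hxy)), slope_def_field,
          div_mul_cancel₀ _ (sub_ne_zero.2 hlt.ne')]
    _ ≤ deriv f x * (y - x) :=
        mul_le_mul_of_nonneg_right (hf.slope_le_deriv hx hy hlt hd) (sub_nonneg.2 hxy)
    _ ≤ deriv f x * t := mul_le_mul_of_nonneg_left ht hderiv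

theorem Finset.sum_mul_le_mul_sum_abs {ι : Type*} (s : Finset ι) {c x : ι → ℝ} {C : ℝ}
    (hc : ∀ i ∈ s, 0 ≤ c i) (hcC : ∀ i ∈ s, c i ≤ C) :
    ∑ i ∈ s, c i * x i ≤ C * ∑ i ∈ s, |x i| := by
  rw [mul_sum]
  refine sum_le_sum fun i hi => ?_
  calc c i * x i ≤ c i * |x i| := mul_le_mul_of_nonneg_left (le_abs_self _) (hc i hi)
    _ ≤ C * |x i| := mul_le_mul_of_nonneg_right (hcC i hi) (abs_nonneg _)

theorem Fin.sum_abs_mul_castSucc_add_last_le {n : ℕ} {c : Fin (n + 1) → ℝ} {c' K : ℝ}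
    (hc : ∀ i, |c i| ≤ K) (hc' : |c'| ≤ K) (d : Fin (n + 2) → ℝ) :
    ∑ i : Fin (n + 1), |c i * d i.castSucc + if i = Fin.last n then c' * d (Fin.last _) else 0|
      ≤ K * ∑ a, |d a| := by
  calc ∑ i : Fin (n + 1), |c i * d i.castSucc + if i = Fin.last n then c' * d (Fin.last _) else 0|
      ≤ ∑ i : Fin (n + 1), (K * |d i.castSucc| +
          if i = Fin.last n then K * |d (Fin.last _)| else 0) := by
        refine sum_le_sum fun i _ => (abs_add_le _ _).trans (add_le_add ?_ ?_)
        · rw [abs_mul]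
          exact mul_le_mul_of_nonneg_right (hc i) (abs_nonneg _)
        · split_ifs
          · rw [abs_mul]
            exact mul_le_mul_of_nonneg_right hc' (abs_nonneg _)
          · simp
    _ = K * ∑ a, |d a| := by
        rw [sum_add_distrib, sum_ite_eq' univ (Fin.last n), if_pos (mem_univ _),
          ← mul_sum, ← mul_add, Fin.sum_univ_castSucc (n := n + 1) fun a => |d a|]

section Dynamics

variable {A : ℕ} {γ w : ℕ → ℝ}

theorem SSB_nonneg (hγ : ∀ k, 0 ≤ γ k) (hw : ∀ k, 0 ≤ w k) {N : Fin A → ℝ}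
    (hN : 0 ≤ N) : 0 ≤ SSB A γ w N :=
  sum_nonneg fun a _ => mul_nonneg (mul_nonneg (hγ a) (hw a)) (hN a)

theorem SSB_sub_SSB_le (hγ : ∀ k, 0 ≤ γ k) (hw : ∀ k, 0 ≤ w k)
    (hne : (univ : Finset (Fin A)).Nonempty) (N N' : Fin A → ℝ) :
    SSB A γ w N - SSB A γ w N' ≤
      univ.sup' hne (fun a : Fin A => γ a.val * w a.val) * ∑ a, |N a - N' a| := by
  rw [SSB, SSB, ← sum_sub_distrib]
  simp_rw [← mul_sub]
  exact sum_mul_le_mul_sum_abs _ (fun a _ => mul_nonneg (hγ a) (hw a))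
    (fun a _ => le_sup' (fun a : Fin A => γ a.val * w a.val) (mem_univ a))

variable {M F : ℕ → ℝ} {pi : ℝ} {φ : ℝ → ℝ} {lam : ℝ}

theorem Gdyn_of_val_eq_zero (N : Fin A → ℝ) {a : Fin A} (ha : a.val = 0) :
    Gdyn A M F γ w pi φ N lam a = φ (SSB A γ w N) := by
  rw [Gdyn, dif_pos ha]

theorem Gdyn_succ {n : ℕ} (N : Fin (n + 2) → ℝ) (i : Fin (n + 1)) :
    Gdyn (n + 2) M F γ w pi φ N lam i.succ =
      Real.exp (-(M i + lam * F i)) * N i.castSucc +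
        if i = Fin.last n then pi * Real.exp (-(M (n + 1) + lam * F (n + 1))) * N (Fin.last _)
        else 0 := by
  have hi : (i.succ : ℕ) ≠ 0 := by simp
  rw [Gdyn, dif_neg hi]
  by_cases hlast : i = Fin.last n
  · subst hlast
    rw [dif_neg (by simp), if_pos rfl]
    rfl
  · have hlt : (i.succ : ℕ) < n + 2 - 1 := by
      rw [Fin.val_succ]
      have := Fin.val_lt_last hlast
      omega
    rw [dif_pos hlt, if_neg hlast, add_zero]
    rfl

theorem Gdyn_succ_sub_Gdyn_succ {n : ℕ} (N N' : Fin (n + 2) → ℝ) (i : Fin (n + 1)) :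
    Gdyn (n + 2) M F γ w pi φ N lam i.succ - Gdyn (n + 2) M F γ w pi φ N' lam i.succ =
      Real.exp (-(M i + lam * F i)) * (N - N') i.castSucc +
        if i = Fin.last n then
          pi * Real.exp (-(M (n + 1) + lam * F (n + 1))) * (N - N') (Fin.last _)
        else 0 := by
  rw [Gdyn_succ, Gdyn_succ]
  split_ifs <;> simp only [Pi.sub_apply] <;> ring

end Dynamics

/-- key contraction estimate for the age-class dynamics around the fixed
point `N̄` of `G(·,λ♭)`, in the `ℓ¹` norm. -/
theorem stmt15 (A : ℕ) (hA : 2 ≤ A) (M F γ w : ℕ → ℝ) (pi : ℝ) (lamb : ℝ)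
    (hγ : ∀ k, 0 ≤ γ k) (hw : ∀ k, 0 ≤ w k)
    (hpi : pi = 0 ∨ pi = 1)
    (φ : ℝ → ℝ) (hφconc : ConcaveOn ℝ (Set.Ici (0 : ℝ)) φ)
    (hφmono : MonotoneOn φ (Set.Ici (0 : ℝ)))
    (hφdiff : ∀ B ∈ Set.Ici (0 : ℝ), DifferentiableAt ℝ φ B)
    (NB : Fin A → ℝ) (hNB : 0 ≤ NB) (hfix : Gdyn A M F γ w pi φ NB lamb = NB)
    (N : Fin A → ℝ) (hSSB : SSB A γ w NB ≤ SSB A γ w N) :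
    ∑ a : Fin A, |Gdyn A M F γ w pi φ N lamb a - NB a| ≤
      (deriv φ (SSB A γ w NB) *
          Finset.univ.sup' ⟨⟨0, by omega⟩, Finset.mem_univ _⟩
            (fun a : Fin A => γ a.val * w a.val) +
        Finset.univ.sup' ⟨⟨0, by omega⟩, Finset.mem_univ _⟩
          (fun a : Fin A => Real.exp (-(M a.val + lamb * F a.val)))) *
        ∑ a : Fin A, |N a - NB a| := by
  obtain ⟨n, rfl⟩ : ∃ n, A = n + 2 := ⟨A - 2, by omega⟩
  set survival := fun a : Fin (n + 2) => Real.exp (-(M a.val + lamb * F a.val))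
  set K := univ.sup' univ_nonempty survival
  have hNB₀ : 0 ≤ SSB (n + 2) γ w NB := SSB_nonneg hγ hw hNB
  have hrecruit : |Gdyn (n + 2) M F γ w pi φ N lamb 0 - NB 0| ≤
      deriv φ (SSB (n + 2) γ w NB) *
        (univ.sup' univ_nonempty (fun a : Fin (n + 2) => γ a.val * w a.val) *
          ∑ a, |N a - NB a|) := by
    rw [← congrFun hfix 0, Gdyn_of_val_eq_zero _ rfl, Gdyn_of_val_eq_zero _ rfl]
    exact hφconc.abs_sub_le_deriv_mul_of_monotoneOn hφmono hNB₀ hSSB (hφdiff _ hNB₀)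
      (SSB_sub_SSB_le hγ hw _ N NB)
  have hsurvival : ∑ i : Fin (n + 1), |Gdyn (n + 2) M F γ w pi φ N lamb i.succ - NB i.succ| ≤
      K * ∑ a, |N a - NB a| := by
    have hpi₁ : |pi| ≤ 1 := by rcases hpi with rfl | rfl <;> simp
    have hc (i : Fin (n + 1)) : |Real.exp (-(M i + lamb * F i))| ≤ K := by
      rw [Real.abs_exp]
      exact le_sup' survival (mem_univ i.castSucc)
    have hc' : |pi * Real.exp (-(M (n + 1) + lamb * F (n + 1)))| ≤ K := by
      rw [abs_mul, Real.abs_exp]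
      exact (mul_le_of_le_one_left (Real.exp_pos _).le hpi₁).trans
        (le_sup' survival (mem_univ (Fin.last _)))
    simpa only [← congrFun hfix (Fin.succ _), Gdyn_succ_sub_Gdyn_succ, Pi.sub_apply] using
      Fin.sum_abs_mul_castSucc_add_last_le hc hc' (N - NB)
  calc ∑ a, |Gdyn (n + 2) M F γ w pi φ N lamb a - NB a|
      ≤ _ + _ := (Fin.sum_univ_succ _).trans_le (add_le_add hrecruit hsurvival)
    _ = _ := by ring
end
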